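/- Let d ≥ 1 and n ≥ 1 be integers. The union of the Kuhn simplices k(v,π), taken over all admissible pairs (v,π) for n that additionally satisfy v_d = 0, equals the base {x ∈ S^n : 0 ≤ x_d ≤ 1} of S^n. -/

import Mathlib

/-! A point `x` of `k(v, π)` is `v + t` with `t ∈ [0,1]^d` decreasing along `π`. Where the
integral, decreasing vector `v` drops, it drops by at least one, so `x` decreases there; on a
plateau of `v` admissibility says `π` visits the coordinates in order, so `x` decreases there too.
Conversely, for `x` in the base take for `v` the lower corner of a unit cube containing `x` and
let `π` sort `x - v` decreasingly, ties broken by index: that stable tie-breaking is exactly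
admissibility, and `x_d ≤ 1` gives `v_d = 0`. -/

/-- The right `d`-simplex `S^α = {x ∈ ℝ^d : α ≥ x_1 ≥ x_2 ≥ … ≥ x_d ≥ 0}`
(coordinates indexed by `Fin d`, in order). -/
def Sset (d : ℕ) (α : ℝ) : Set (Fin d → ℝ) :=
  {x | (∀ i : Fin d, 0 ≤ x i ∧ x i ≤ α) ∧ ∀ i j : Fin d, i ≤ j → x j ≤ x i}

/-- The Kuhn simplex `k(v,π) = {x : 1 ≥ (x−v)_{π(1)} ≥ … ≥ (x−v)_{π(d)} ≥ 0}`. -/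
def kuhn (d : ℕ) (v : Fin d → ℝ) (π : Equiv.Perm (Fin d)) : Set (Fin d → ℝ) :=
  {x | (∀ i : Fin d, 0 ≤ x (π i) - v (π i) ∧ x (π i) - v (π i) ≤ 1) ∧
       ∀ i j : Fin d, i ≤ j → x (π j) - v (π j) ≤ x (π i) - v (π i)}

/-- `(v,π)` with `v ∈ ℤ^d` is admissible for `m` if `v ∈ S^{m-1}` and whenever
`v_j = v_{j+1}`, `j` precedes `j+1` in `π`, i.e. `π⁻¹(j) < π⁻¹(j+1)`. -/
def admissible (d m : ℕ) (v : Fin d → ℤ) (π : Equiv.Perm (Fin d)) : Prop :=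
  ((fun i => (v i : ℝ)) ∈ Sset d ((m : ℝ) - 1)) ∧
  ∀ (j : Fin d) (h : (j : ℕ) + 1 < d),
    v j = v ⟨(j : ℕ) + 1, h⟩ → π.symm j < π.symm ⟨(j : ℕ) + 1, h⟩

open Set

theorem Fin.strictMonoOn_of_lt_add_one {d : ℕ} {β : Type*} [Preorder β] {f : Fin d → β}
    {s : Set (Fin d)} (hs : s.OrdConnected)
    (hf : ∀ (i : Fin d) (h : (i : ℕ) + 1 < d), i ∈ s → ⟨i + 1, h⟩ ∈ s → f i < f ⟨i + 1, h⟩) :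
    StrictMonoOn f s := by
  refine strictMonoOn_of_lt_succ hs fun i hi his hsi => ?_
  have h : (i : ℕ) + 1 < d := by
    by_contra hc
    exact hi fun j _ => Fin.le_def.2 (by omega)
  have hsucc : Order.succ i = ⟨i + 1, h⟩ :=
    Order.succ_eq_of_covBy (Fin.covBy_iff.2 (Order.covBy_add_one _))
  rw [hsucc] at hsi ⊢
  exact hf i h his hsi

theorem Tuple.symm_sort_lt_of_lt_of_le {n : ℕ} {α : Type*} [LinearOrder α] {f : Fin n → α}
    {i j : Fin n} (hij : i < j) (hf : f i ≤ f j) : (sort f).symm i < (sort f).symm j := by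
  obtain ⟨hmono, hties⟩ := eq_sort_iff.1 (rfl : sort f = sort f)
  by_contra! hji
  have hji : (sort f).symm j < (sort f).symm i := hji.lt_of_ne (by simpa using hij.ne')
  have hfji : f j ≤ f i := by simpa using hmono hji.le
  have := hties _ _ hji (by simpa using le_antisymm hfji hf)
  simp only [Equiv.apply_symm_apply] at this
  exact lt_asymm hij this

section Kuhn

variable {d : ℕ} {x v : Fin d → ℝ} {π : Equiv.Perm (Fin d)}

theorem sub_mem_Icc_of_mem_kuhn (hx : x ∈ kuhn d v π) (i : Fin d) :
    x i - v i ∈ Icc (0 : ℝ) 1 := by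
  simpa using hx.1 (π.symm i)

theorem sub_le_sub_of_mem_kuhn (hx : x ∈ kuhn d v π) {i j : Fin d}
    (h : π.symm i ≤ π.symm j) : x j - v j ≤ x i - v i := by
  simpa using hx.2 _ _ h

theorem mem_kuhn_sort (hx : ∀ i, x i - v i ∈ Icc (0 : ℝ) 1) :
    x ∈ kuhn d v (Tuple.sort (v - x)) := by
  refine ⟨fun i => hx _, fun i j hij => ?_⟩
  have := Tuple.monotone_sort (v - x) hij
  simp only [Function.comp_apply, Pi.sub_apply] at this
  linarith

end Kuhn

namespace admissible

variable {d m : ℕ} {v : Fin d → ℤ} {π : Equiv.Perm (Fin d)}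

theorem antitone (ha : admissible d m v π) : Antitone v :=
  fun i j hij => Int.cast_le.1 (ha.1.2 i j hij)

theorem strictMonoOn_symm (ha : admissible d m v π) (c : ℤ) :
    StrictMonoOn π.symm (v ⁻¹' {c}) :=
  Fin.strictMonoOn_of_lt_add_one (ordConnected_singleton.preimage_anti ha.antitone)
    fun j h hj hj' => ha.2 j h (hj.trans hj'.symm)

end admissible

section IntegralVertex

variable {d m : ℕ} {x : Fin d → ℝ} {v : Fin d → ℤ} {π : Equiv.Perm (Fin d)}

theorem antitone_of_mem_kuhn (hv : Antitone v) (hπ : ∀ c, MonotoneOn π.symm (v ⁻¹' {c}))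
    (hx : x ∈ kuhn d (fun i => v i) π) : Antitone x := by
  intro i j hij
  have hxi := sub_mem_Icc_of_mem_kuhn hx i
  have hxj := sub_mem_Icc_of_mem_kuhn hx j
  rcases (hv hij).lt_or_eq with hlt | heq
  · have : (v j : ℝ) + 1 ≤ v i := by exact_mod_cast hlt
    linarith [hxi.1, hxj.2]
  · have := sub_le_sub_of_mem_kuhn hx (hπ (v i) rfl heq hij)
    have : (v j : ℝ) = v i := by exact_mod_cast heq
    linarith

theorem mem_Sset_of_mem_kuhn (ha : admissible d m v π) (hx : x ∈ kuhn d (fun i => v i) π) :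
    x ∈ Sset d m := by
  refine ⟨fun i => ?_,
    antitone_of_mem_kuhn ha.antitone (fun c => (ha.strictMonoOn_symm c).monotoneOn) hx⟩
  have hxi := sub_mem_Icc_of_mem_kuhn hx i
  have hvi := ha.1.1 i
  simp only at hvi
  constructor <;> linarith [hxi.1, hxi.2, hvi.1, hvi.2]

end IntegralVertex

/-- `⌈y⌉ - 1` rather than `⌊y⌋`, so that `y ≤ m` gives `cubeCorner y ≤ m - 1`
also at `y = m`. -/
noncomputable def cubeCorner (y : ℝ) : ℤ := max (⌈y⌉ - 1) 0

theorem cubeCorner_nonneg (y : ℝ) : 0 ≤ cubeCorner y := le_max_right _ _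

theorem cubeCorner_mono : Monotone cubeCorner :=
  fun _ _ h => max_le_max (by linarith [Int.ceil_le_ceil h]) le_rfl

theorem sub_cubeCorner_mem_Icc {y : ℝ} (hy : 0 ≤ y) : y - cubeCorner y ∈ Icc (0 : ℝ) 1 := by
  have := Int.ceil_lt_add_one y
  have := Int.le_ceil y
  simp only [cubeCorner, Int.cast_max, Int.cast_sub, Int.cast_one, Int.cast_zero]
  constructor
  · exact sub_nonneg.2 (max_le (by linarith) hy)
  · linarith [le_max_left ((⌈y⌉ : ℝ) - 1) 0]

theorem cubeCorner_le_sub_one {y : ℝ} {m : ℤ} (hm : 1 ≤ m) (hy : y ≤ m) :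
    cubeCorner y ≤ m - 1 :=
  max_le (by linarith [Int.ceil_le.2 hy]) (by linarith)

theorem cubeCorner_eq_zero_of_le_one {y : ℝ} (hy : y ≤ 1) : cubeCorner y = 0 :=
  le_antisymm (by simpa using cubeCorner_le_sub_one le_rfl (by exact_mod_cast hy))
    (cubeCorner_nonneg y)

theorem admissible_sort {d m : ℕ} (hm : 1 ≤ m) {x : Fin d → ℝ} (hx : x ∈ Sset d m) :
    admissible d m (fun i => cubeCorner (x i))
      (Tuple.sort ((fun i => (cubeCorner (x i) : ℝ)) - x)) := by
  refine ⟨⟨fun i => ⟨?_, ?_⟩, fun i j hij => ?_⟩, fun j h hj => ?_⟩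
  · exact Int.cast_nonneg (cubeCorner_nonneg (x i))
  · have := cubeCorner_le_sub_one (m := m) (by exact_mod_cast hm) (by exact_mod_cast (hx.1 i).2)
    simpa using (Int.cast_le (R := ℝ)).2 this
  · exact Int.cast_le.2 (cubeCorner_mono (hx.2 i j hij))
  · refine Tuple.symm_sort_lt_of_lt_of_le (Fin.lt_def.2 (Nat.lt_add_one _)) ?_
    simp only [Pi.sub_apply, hj]
    linarith [hx.2 j ⟨j + 1, h⟩ (Fin.le_def.2 (Nat.le_add_right _ _))]

/-- the union of the Kuhn simplices over all admissible pairs for `n`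
with `v_d = 0` equals the base `{x ∈ S^n : 0 ≤ x_d ≤ 1}`. -/
theorem iUnion_admissible_base_kuhn_eq_base (d n : ℕ) (hd : 1 ≤ d) (hn : 1 ≤ n) :
    ⋃ (v : Fin d → ℤ) (π : Equiv.Perm (Fin d))
      (_ : admissible d n v π) (_ : v ⟨d - 1, by omega⟩ = 0),
      kuhn d (fun i => (v i : ℝ)) π
      = {x ∈ Sset d (n : ℝ) | 0 ≤ x ⟨d - 1, by omega⟩ ∧ x ⟨d - 1, by omega⟩ ≤ 1} := by
  ext x
  simp only [mem_iUnion, mem_ofPred_eq]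
  constructor
  · rintro ⟨v, π, ha, hv0, hx⟩
    have hlast := sub_mem_Icc_of_mem_kuhn hx ⟨d - 1, by omega⟩
    simp only [hv0, Int.cast_zero, sub_zero, mem_Icc] at hlast
    exact ⟨mem_Sset_of_mem_kuhn ha hx, hlast⟩
  · rintro ⟨hx, -, hx1⟩
    exact ⟨_, _, admissible_sort hn hx, cubeCorner_eq_zero_of_le_one hx1,
      mem_kuhn_sort fun i => sub_cubeCorner_mem_Icc (hx.1 i).1⟩
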